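/- arXiv:1402.5616 — 5 statements merged into one kernel-verified Lean document; each statement's English description precedes it below -/
import Mathlib

section
/- The mad spectrum is closed under singular limits: if μ is a cardinal with cf(μ) < μ and μ = sup of a set of cardinalities of infinite mad families on ω each below μ (one for each i < cf(μ), with cf(μ) ≤ μ_i < μ and Σ_{i<cf(μ)} μ_i = μ), then there exists a mad family on ω of cardinality μ. -/
/-- A family of subsets of ℕ is almost disjoint: all members are infinite
and distinct members have finite intersection. -/
def IsAlmostDisjoint (A : Set (Set ℕ)) : Prop :=
  (∀ a ∈ A, a.Infinite) ∧ A.Pairwise fun a b => (a ∩ b).Finite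

/-- A family is maximal almost disjoint (mad). -/
def IsMad (A : Set (Set ℕ)) : Prop :=
  IsAlmostDisjoint A ∧ ∀ b : Set ℕ, b.Infinite → ∃ a ∈ A, (b ∩ a).Infinite

/-!
Fix one of the given mad families `B` and `cf μ` distinct members `F i ∈ B` (possible as
`cf μ ≤ |B|`). Each `F i` is a copy of `ℕ` via its increasing enumeration, which transports the
`i`-th given mad family to a family `C i` that is mad below `F i`. Replacing every `F i` by `C i`
keeps the family mad: a set meeting `F i` infinitely meets some member of `C i` infinitely. As
distinct `F i` are almost disjoint, the `C i` are pairwise disjoint, so the new family has size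
`|B| + ∑ μ i = μ`.
-/

open Cardinal Function Set

structure IsMadOn (s : Set ℕ) (A : Set (Set ℕ)) : Prop where
  almostDisjoint : IsAlmostDisjoint A
  subset : ∀ a ∈ A, a ⊆ s
  maximal : ∀ b ⊆ s, b.Infinite → ∃ a ∈ A, (b ∩ a).Infinite

theorem IsMad.isMadOn_image {A : Set (Set ℕ)} (hA : IsMad A) {π : ℕ → ℕ} (hπ : Injective π) :
    IsMadOn (range π) (image π '' A) where
  almostDisjoint := by
    refine ⟨?_, ?_⟩
    · rintro _ ⟨a, ha, rfl⟩
      exact (hA.1.1 a ha).image hπ.injOn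
    · rintro _ ⟨a, ha, rfl⟩ _ ⟨b, hb, rfl⟩ hne
      rw [← image_inter hπ]
      exact (hA.1.2 ha hb fun h => hne (h ▸ rfl)).image π
  subset := by
    rintro _ ⟨a, -, rfl⟩
    exact image_subset_range π a
  maximal b hb hb_inf := by
    have hpre : (π ⁻¹' b).Infinite := by
      refine Infinite.of_image π ?_
      rwa [image_preimage_eq_of_subset hb]
    obtain ⟨a, ha, hpre_a⟩ := hA.2 _ hpre
    refine ⟨π '' a, mem_image_of_mem _ ha, (hpre_a.image hπ.injOn).mono ?_⟩
    rw [image_inter hπ]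
    exact inter_subset_inter_left _ (image_preimage_subset π b)

theorem IsMad.isMadOn_image_nth {A : Set (Set ℕ)} (hA : IsMad A) {s : Set ℕ} (hs : s.Infinite) :
    IsMadOn s (image (Nat.nth s) '' A) := by
  have := hA.isMadOn_image (Nat.nth_injective hs)
  rwa [Nat.range_nth_of_infinite hs] at this

theorem Cardinal.mk_union_eq_right_of_mk_le {α : Type*} {s t : Set α} (ht : ℵ₀ ≤ #t)
    (hst : #s ≤ #t) : #(s ∪ t : Set α) = #t :=
  le_antisymm ((mk_union_le s t).trans (add_eq_right ht hst).le)
    (mk_le_mk_of_subset subset_union_right)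

section Glue

variable {B : Set (Set ℕ)} {ι : Type*} {F : ι → Set ℕ} {C : ι → Set (Set ℕ)}

theorem IsAlmostDisjoint.inter_finite_of_isMadOn (hB : IsAlmostDisjoint B) (hF : Injective F)
    (hFB : ∀ i, F i ∈ B) (hC : ∀ i, IsMadOn (F i) (C i)) {i j : ι} (hij : i ≠ j)
    {x y : Set ℕ} (hx : x ∈ C i) (hy : y ∈ C j) : (x ∩ y).Finite :=
  (hB.2 (hFB i) (hFB j) (hF.ne hij)).subset
    (inter_subset_inter ((hC i).subset x hx) ((hC j).subset y hy))

theorem IsAlmostDisjoint.glue (hB : IsAlmostDisjoint B) (hF : Injective F) (hFB : ∀ i, F i ∈ B)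
    (hC : ∀ i, IsMadOn (F i) (C i)) : IsAlmostDisjoint ((B \ range F) ∪ ⋃ i, C i) := by
  have hBC : ∀ x ∈ B \ range F, ∀ i, ∀ y ∈ C i, (x ∩ y).Finite := fun x hx i y hy =>
    (hB.2 hx.1 (hFB i) fun h => hx.2 ⟨i, h.symm⟩).subset
      (inter_subset_inter_right x ((hC i).subset y hy))
  refine ⟨?_, ?_⟩
  · rintro a (ha | ha)
    · exact hB.1 a ha.1
    · obtain ⟨i, hi⟩ := mem_iUnion.mp ha
      exact (hC i).almostDisjoint.1 a hi
  · rintro x (hx | hx) y (hy | hy) hne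
    · exact hB.2 hx.1 hy.1 hne
    · obtain ⟨j, hj⟩ := mem_iUnion.mp hy
      exact hBC x hx j y hj
    · obtain ⟨i, hi⟩ := mem_iUnion.mp hx
      exact inter_comm x y ▸ hBC y hy i x hi
    · obtain ⟨i, hi⟩ := mem_iUnion.mp hx
      obtain ⟨j, hj⟩ := mem_iUnion.mp hy
      rcases eq_or_ne i j with rfl | hij
      · exact (hC i).almostDisjoint.2 hi hj hne
      · exact hB.inter_finite_of_isMadOn hF hFB hC hij hi hj

theorem IsMad.glue (hB : IsMad B) (hF : Injective F) (hFB : ∀ i, F i ∈ B)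
    (hC : ∀ i, IsMadOn (F i) (C i)) : IsMad ((B \ range F) ∪ ⋃ i, C i) := by
  refine ⟨hB.1.glue hF hFB hC, fun X hX => ?_⟩
  obtain ⟨b, hb, hXb⟩ := hB.2 X hX
  by_cases hbF : b ∈ range F
  · obtain ⟨i, rfl⟩ := hbF
    obtain ⟨a, ha, hXa⟩ := (hC i).maximal (X ∩ F i) inter_subset_right hXb
    exact ⟨a, mem_union_right _ (mem_iUnion_of_mem i ha),
      hXa.mono (inter_subset_inter_left a inter_subset_left)⟩
  · exact ⟨b, mem_union_left _ ⟨hb, hbF⟩, hXb⟩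

end Glue

section Cardinality

variable {B : Set (Set ℕ)} {ι : Type} {F : ι → Set ℕ} {C : ι → Set (Set ℕ)}

theorem IsAlmostDisjoint.mk_iUnion_of_isMadOn (hB : IsAlmostDisjoint B) (hF : Injective F)
    (hFB : ∀ i, F i ∈ B) (hC : ∀ i, IsMadOn (F i) (C i)) : #(⋃ i, C i) = sum fun i => #(C i) := by
  refine mk_iUnion_eq_sum_mk fun i j hij => disjoint_left.mpr fun z hzi hzj => ?_
  exact (hC i).almostDisjoint.1 z hzi
    (inter_self z ▸ hB.inter_finite_of_isMadOn hF hFB hC hij hzi hzj)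

theorem IsAlmostDisjoint.mk_glue {κ : Cardinal} (hB : IsAlmostDisjoint B) (hF : Injective F)
    (hFB : ∀ i, F i ∈ B) (hC : ∀ i, IsMadOn (F i) (C i)) (hCκ : (sum fun i => #(C i)) = κ)
    (hBκ : #B ≤ κ) (hκ : ℵ₀ ≤ κ) : #((B \ range F) ∪ ⋃ i, C i : Set (Set ℕ)) = κ := by
  have hU : #(⋃ i, C i) = κ := (hB.mk_iUnion_of_isMadOn hF hFB hC).trans hCκ
  have hBU : #(B \ range F : Set (Set ℕ)) ≤ #(⋃ i, C i) :=
    hU ▸ (mk_le_mk_of_subset sdiff_subset).trans hBκ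
  rw [mk_union_eq_right_of_mk_le (hU ▸ hκ) hBU, hU]

end Cardinality

/-- The mad spectrum is closed under singular limits: if `μ` is singular and is the
sum of cardinals `μ i < μ`, `cf μ ≤ μ i`, each the cardinality of an infinite mad
family, then there is a mad family of cardinality `μ`. -/
theorem mad_spectrum_closed_under_singular_limits
    (μ : Cardinal) (hsing : μ.ord.cof < μ)
    (ι : Type) (hι : Cardinal.mk ι = μ.ord.cof)
    (μi : ι → Cardinal)
    (hlow : ∀ i, μ.ord.cof ≤ μi i) (hlt : ∀ i, μi i < μ)
    (hsum : Cardinal.sum μi = μ)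
    (hmad : ∀ i, ∃ A : Set (Set ℕ), IsMad A ∧ A.Infinite ∧ Cardinal.mk A = μi i) :
    ∃ A : Set (Set ℕ), IsMad A ∧ A.Infinite ∧ Cardinal.mk A = μ := by
  choose A hA_mad hA_inf hA_card using hmad
  obtain ⟨i₀⟩ : Nonempty ι := by
    by_contra h
    have : IsEmpty ι := not_nonempty_iff.mp h
    have hμ : μ = 0 := by rw [← hsum, sum]; exact mk_eq_zero _
    exact (hμ ▸ hsing).not_ge zero_le
  obtain ⟨F⟩ : Nonempty (ι ↪ A i₀) := by
    rw [← le_def, hι, hA_card]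
    exact hlow i₀
  have hμ : ℵ₀ ≤ μ := by
    have := (hA_inf i₀).to_subtype
    exact (hA_card i₀ ▸ aleph0_le_mk (A i₀)).trans (hlt i₀).le
  have hF_inj : Injective fun i => (F i : Set ℕ) := Subtype.val_injective.comp F.injective
  have hF_inf : ∀ i, (F i : Set ℕ).Infinite := fun i => (hA_mad i₀).1.1 _ (F i).2
  set C := fun i => image (Nat.nth (F i : Set ℕ)) '' A i
  have hC : ∀ i, IsMadOn (F i) (C i) := fun i => (hA_mad i).isMadOn_image_nth (hF_inf i)
  have hC_card : (sum fun i => #(C i)) = μ := by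
    rw [← hsum]
    congr! with i
    rw [mk_image_eq (image_injective.mpr (Nat.nth_injective (hF_inf i))), hA_card]
  have h_card := (hA_mad i₀).1.mk_glue hF_inj (fun i => (F i).2) hC hC_card
    (hA_card i₀ ▸ (hlt i₀).le) hμ
  refine ⟨_, (hA_mad i₀).glue hF_inj (fun i => (F i).2) hC, ?_, h_card⟩
  rw [← infinite_coe_iff, infinite_iff, h_card]
  exact hμ
end

section
/- The forcing Q_μ satisfies: for p, q ∈ Q_μ, if n_p ≤ n_q and p, q are incompatible, then either there exist α ∈ dom(p) ∩ dom(q) and n < n_p with p(α)(n) ≠ q(α)(n), or n_p < n_q and there exist distinct α, β ∈ dom(p) ∩ dom(q) and n ∈ [n_p, n_q) with q(α)(n) = q(β)(n) = 1. -/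
/-- A condition in the forcing `Q_μ` (over an index type `α`): a finite partial
function from `α` into binary sequences of a common length `n`. We represent the
values as a total function `f : α → ℕ → Bool` which is `false` (i.e. `0`)
outside `dom × [0, n)`. -/
structure QCond (α : Type) where
  n : ℕ
  dom : Finset α
  f : α → ℕ → Bool
  hf : ∀ a k, f a k = true → a ∈ dom ∧ k < n

/-- The order on `Q_μ`: `p ≤ q` iff `dom p ⊆ dom q`, each `p a` is an initial
segment of `q a`, and for distinct `a, b ∈ dom p` and `k ∈ [n_p, n_q)`,
`q a k = 0` or `q b k = 0`. -/
def QLE {α : Type} (p q : QCond α) : Prop :=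
  p.dom ⊆ q.dom ∧ p.n ≤ q.n ∧
  (∀ a ∈ p.dom, ∀ k < p.n, q.f a k = p.f a k) ∧
  (∀ a ∈ p.dom, ∀ b ∈ p.dom, a ≠ b →
    ∀ k, p.n ≤ k → k < q.n → q.f a k = false ∨ q.f b k = false)

/-- Compatibility: existence of a common extension. -/
def QCompatible {α : Type} (p q : QCond α) : Prop :=
  ∃ r : QCond α, QLE p r ∧ QLE q r

/-- If `p, q ∈ Q_μ` with `n_p ≤ n_q` are incompatible, then either they directly
disagree at some `a ∈ dom p ∩ dom q` and `k < p.n`, or `n_p < n_q` and there are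
distinct `a, b ∈ dom p ∩ dom q` and `k ∈ [n_p, n_q)` with `q a k = q b k = 1`. -/
theorem QCond.incompatible_cases {α : Type} (p q : QCond α)
    (hn : p.n ≤ q.n) (h : ¬ QCompatible p q) :
    (∃ a, a ∈ p.dom ∧ a ∈ q.dom ∧ ∃ k < p.n, p.f a k ≠ q.f a k) ∨
    (p.n < q.n ∧ ∃ a b, a ∈ p.dom ∧ a ∈ q.dom ∧ b ∈ p.dom ∧ b ∈ q.dom ∧ a ≠ b ∧
      ∃ k, p.n ≤ k ∧ k < q.n ∧ q.f a k = true ∧ q.f b k = true) := by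
  classical
  by_contra hc
  push_neg at hc
  obtain ⟨h1, h2⟩ := hc
  apply h
  refine ⟨⟨q.n, p.dom ∪ q.dom,
    fun a k => if a ∈ q.dom then q.f a k else p.f a k, ?_⟩, ?_, ?_⟩
  · intro a k hak
    by_cases hq : a ∈ q.dom
    · simp only [hq, if_true] at hak
      exact ⟨Finset.mem_union_right _ hq, (q.hf a k hak).2⟩
    · simp only [hq, if_false] at hak
      obtain ⟨hd, hk⟩ := p.hf a k hak
      exact ⟨Finset.mem_union_left _ hd, lt_of_lt_of_le hk hn⟩
  · refine ⟨fun a ha => Finset.mem_union_left _ ha, hn, ?_, ?_⟩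
    · intro a ha k hk
      by_cases hq : a ∈ q.dom
      · simp only [hq, if_true]
        exact (h1 a ha hq k hk).symm
      · simp [hq]
    · intro a ha b hb hab k hpk hkq
      by_cases hqa : a ∈ q.dom
      · by_cases hqb : b ∈ q.dom
        · simp only [hqa, hqb, if_true]
          by_contra hboth
          push_neg at hboth
          obtain ⟨ha', hb'⟩ := hboth
          have hplt : p.n < q.n := lt_of_le_of_lt hpk hkq
          exact h2 hplt a b ha hqa hb hqb hab k hpk hkq
            (eq_true_of_ne_false ha') (eq_true_of_ne_false hb')
        · right
          simp only [hqb, if_false]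
          by_contra hb'
          exact absurd (p.hf b k (eq_true_of_ne_false hb')).2 hpk.not_gt
      · left
        simp only [hqa, if_false]
        by_contra ha'
        exact absurd ((p.hf a k (eq_true_of_ne_false ha')).2) hpk.not_gt
  · refine ⟨fun a ha => Finset.mem_union_right _ ha, le_refl _, ?_, ?_⟩
    · intro a ha k _
      simp [ha]
    · intro a _ b _ _ k hk hk'
      exact absurd hk' (not_lt.mpr hk)
end

section
/- The forcing Q_μ has the Knaster property: every uncountable set of conditions has an uncountable subset any two of whose elements are compatible. -/
attribute [local instance] Classical.decEq

/-- From an uncountable set and a map to a countable type, extract an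
uncountable fiber. -/
lemma exists_uncountable_fiber {β γ : Type*} [Countable γ] {s : Set β}
    (hs : ¬ s.Countable) (f : β → γ) : ∃ c, ¬ {x ∈ s | f x = c}.Countable := by
  by_contra h
  push_neg at h
  apply hs
  have hs' : s = ⋃ c, {x ∈ s | f x = c} := by
    ext x; simp
  rw [hs']
  exact Set.countable_iUnion h

/-- The uncountable Δ-system lemma for families of finite sets of fixed size. -/
lemma delta_system {α : Type} (k : ℕ) (𝒜 : Set (Finset α)) (h𝒜 : ¬ 𝒜.Countable)
    (hk : ∀ A ∈ 𝒜, A.card = k) :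
    ∃ ℬ ⊆ 𝒜, ¬ ℬ.Countable ∧ ∃ R : Finset α,
      ∀ A ∈ ℬ, ∀ B ∈ ℬ, A ≠ B → A ∩ B = R := by
  induction k generalizing 𝒜 with
  | zero =>
    exfalso
    apply h𝒜
    have hsub : 𝒜 ⊆ {∅} := by
      intro A hA
      simp [Finset.card_eq_zero.mp (hk A hA)]
    exact (Set.countable_singleton ∅).mono hsub
  | succ k ih =>
    by_cases hcase : ∃ a, ¬ {A ∈ 𝒜 | a ∈ A}.Countable
    · obtain ⟨a, ha⟩ := hcase
      set 𝒜₁ := {A ∈ 𝒜 | a ∈ A} with h𝒜₁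
      have hins : ∀ A ∈ 𝒜₁, insert a (A.erase a) = A := by
        intro A hA
        exact Finset.insert_erase hA.2
      have hinj : Set.InjOn (fun A => Finset.erase A a) 𝒜₁ := by
        intro A hA B hB hAB
        rw [← hins A hA, ← hins B hB]
        simpa using congrArg (insert a) hAB
      have himg : ¬ ((fun A => Finset.erase A a) '' 𝒜₁).Countable := by
        intro hc
        exact ha ((Set.mapsTo_image _ _).countable_of_injOn hinj hc)
      have hcard : ∀ B ∈ (fun A => Finset.erase A a) '' 𝒜₁, B.card = k := by
        rintro B ⟨A, hA, rfl⟩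
        rw [Finset.card_erase_of_mem hA.2, hk A hA.1]
        rfl
      obtain ⟨ℬ', hℬ'sub, hℬ'u, R, hR⟩ := ih _ himg hcard
      refine ⟨{A ∈ 𝒜₁ | A.erase a ∈ ℬ'}, fun A hA => hA.1.1, ?_, insert a R, ?_⟩
      · intro hc
        apply hℬ'u
        have : ℬ' ⊆ (fun A => Finset.erase A a) '' {A ∈ 𝒜₁ | A.erase a ∈ ℬ'} := by
          intro B hB
          obtain ⟨A, hA, rfl⟩ := hℬ'sub hB
          exact ⟨A, ⟨hA, hB⟩, rfl⟩
        exact ((hc.image _).mono this)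
      · rintro A ⟨hA, hAe⟩ B ⟨hB, hBe⟩ hAB
        have hne : A.erase a ≠ B.erase a := by
          intro h
          exact hAB (hinj hA hB h)
        have hRR := hR _ hAe _ hBe hne
        ext x
        by_cases hx : x = a
        · subst hx
          simp [hA.2, hB.2]
        · constructor
          · intro hxi
            have : x ∈ A.erase a ∩ B.erase a := by
              simp only [Finset.mem_inter, Finset.mem_erase] at *
              exact ⟨⟨hx, hxi.1⟩, ⟨hx, hxi.2⟩⟩
            rw [hRR] at this
            exact Finset.mem_insert_of_mem this
          · intro hxi
            have hxR : x ∈ R := by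
              rcases Finset.mem_insert.mp hxi with h | h
              · exact absurd h hx
              · exact h
            have : x ∈ A.erase a ∩ B.erase a := hRR ▸ hxR
            simp only [Finset.mem_inter, Finset.mem_erase] at this
            exact Finset.mem_inter.mpr ⟨this.1.2, this.2.2⟩
    · push_neg at hcase
      -- every point is in only countably many sets; find an uncountable
      -- pairwise disjoint subfamily via Zorn's lemma
      set 𝒟 : Set (Set (Finset α)) :=
        {ℬ | ℬ ⊆ 𝒜 ∧ ℬ.Pairwise fun A B => A ∩ B = ∅} with h𝒟
      obtain ⟨ℳ, hℳ⟩ := zorn_subset 𝒟 (by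
        intro c hc hchain
        refine ⟨⋃₀ c, ⟨?_, ?_⟩, fun s hs => Set.subset_sUnion_of_mem hs⟩
        · intro A hA
          obtain ⟨t, ht, hAt⟩ := hA
          exact (hc ht).1 hAt
        · intro A hA B hB hAB
          obtain ⟨s, hs, hAs⟩ := hA
          obtain ⟨t, ht, hBt⟩ := hB
          rcases hchain.total hs ht with h | h
          · exact (hc ht).2 (h hAs) hBt hAB
          · exact (hc hs).2 hAs (h hBt) hAB)
      by_cases hMc : ℳ.Countable
      · exfalso
        apply h𝒜
        have hsub : 𝒜 ⊆ ℳ ∪ ⋃ B ∈ ℳ, ⋃ a ∈ (B : Finset α), {A ∈ 𝒜 | a ∈ A} := by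
          intro A hA
          by_contra hA'
          simp only [Set.mem_union, Set.mem_iUnion] at hA'
          push_neg at hA'
          obtain ⟨hAM, hAdis⟩ := hA'
          have hdis : ∀ B ∈ ℳ, A ∩ B = ∅ := by
            intro B hB
            rw [Finset.eq_empty_iff_forall_notMem]
            intro x hx
            rw [Finset.mem_inter] at hx
            exact (hAdis B hB x hx.2) ⟨hA, hx.1⟩
          have hmem : insert A ℳ ∈ 𝒟 := by
            constructor
            · intro B hB
              rcases hB with rfl | hB
              · exact hA
              · exact hℳ.1.1 hB
            · intro B hB C hC hBC
              rcases hB with rfl | hB <;> rcases hC with rfl | hC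
              · exact absurd rfl hBC
              · exact hdis C hC
              · rw [Finset.inter_comm]; exact hdis B hB
              · exact hℳ.1.2 hB hC hBC
          have := hℳ.2 hmem (Set.subset_insert A ℳ)
          exact hAM (this (Set.mem_insert A ℳ))
        apply Set.Countable.mono hsub
        apply hMc.union
        apply hMc.biUnion
        intro B _
        exact (B.countable_toSet).biUnion fun a _ => hcase a
      · exact ⟨ℳ, hℳ.1.1, hMc, ∅, fun A hA B hB hAB => hℳ.1.2 hA hB hAB⟩

/-- Extensionality for `QCond`. -/
lemma QCond.ext'' {α : Type} {p q : QCond α} (hn : p.n = q.n) (hd : p.dom = q.dom)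
    (hff : p.f = q.f) : p = q := by
  cases p; cases q; simp_all

/-- The value function is `false` off `dom × [0, n)`. -/
lemma QCond.f_eq_false {α : Type} (p : QCond α) {a : α} {k : ℕ}
    (h : ¬ (a ∈ p.dom ∧ k < p.n)) : p.f a k = false := by
  by_contra hc
  exact h (p.hf a k (by simpa using hc))

/-- For fixed `n` and domain, there are only countably many conditions. -/
lemma QCond.fiber_countable {α : Type} (n : ℕ) (F : Finset α) :
    {p : QCond α | p.n = n ∧ p.dom = F}.Countable := by
  rw [← Set.countable_coe_iff]
  have hinj : Function.Injective
      (fun p : {p : QCond α | p.n = n ∧ p.dom = F} =>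
        (fun (a : F) (k : Fin n) => p.1.f a k : F → Fin n → Bool)) := ?_
  · exact hinj.countable
  rintro ⟨p, hpn, hpd⟩ ⟨q, hqn, hqd⟩ h
  simp only [Subtype.mk.injEq]
  refine QCond.ext'' (hpn.trans hqn.symm) (hpd.trans hqd.symm) ?_
  funext a k
  by_cases hcase : a ∈ F ∧ k < n
  · exact congrFun (congrFun h ⟨a, hcase.1⟩) ⟨k, hcase.2⟩
  · rw [p.f_eq_false (by rw [hpn, hpd]; exact hcase),
      q.f_eq_false (by rw [hqn, hqd]; exact hcase)]

/-- Two conditions of the same length agreeing on the intersection of their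
domains are compatible. -/
lemma QCond.compatible_of_agree {α : Type} {p q : QCond α} (hn : p.n = q.n)
    (hagree : ∀ a ∈ p.dom ∩ q.dom, ∀ k, p.f a k = q.f a k) : QCompatible p q := by
  refine ⟨⟨p.n, p.dom ∪ q.dom, fun a k => p.f a k || q.f a k, ?_⟩, ?_, ?_⟩
  · intro a k h
    rcases Bool.or_eq_true_iff.mp h with h | h
    · exact ⟨Finset.mem_union_left _ (p.hf a k h).1, (p.hf a k h).2⟩
    · exact ⟨Finset.mem_union_right _ (q.hf a k h).1, hn ▸ (q.hf a k h).2⟩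
  · refine ⟨Finset.subset_union_left, le_refl _, ?_, ?_⟩
    · intro a ha k _
      show (p.f a k || q.f a k) = p.f a k
      cases hq : q.f a k
      · simp
      · have haq : a ∈ p.dom ∩ q.dom := Finset.mem_inter.mpr ⟨ha, (q.hf a k hq).1⟩
        rw [hagree a haq k, hq]
        rfl
    · intro a _ b _ _ k hk1 hk2
      exact absurd (lt_of_le_of_lt hk1 hk2) (lt_irrefl _)
  · refine ⟨Finset.subset_union_right, le_of_eq hn.symm, ?_, ?_⟩
    · intro a ha k _
      show (p.f a k || q.f a k) = q.f a k
      cases hp : p.f a k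
      · simp
      · have haq : a ∈ p.dom ∩ q.dom := Finset.mem_inter.mpr ⟨(p.hf a k hp).1, ha⟩
        rw [← hagree a haq k, hp]
        rfl
    · intro a _ b _ _ k hk1 hk2
      exact absurd (lt_of_le_of_lt hk1 (hn ▸ hk2)) (lt_irrefl _)

/-- The forcing `Q_μ` has the Knaster property: every uncountable set of
conditions has an uncountable subset any two of whose elements are compatible. -/
theorem QCond.knaster {α : Type} (S : Set (QCond α)) (hS : ¬ S.Countable) :
    ∃ T ⊆ S, ¬ T.Countable ∧ T.Pairwise QCompatible := by
  -- Step 1: fix the length `n` and the domain size `m`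
  obtain ⟨⟨n, m⟩, hnm⟩ := exists_uncountable_fiber hS
    (fun p : QCond α => ((p.n, p.dom.card) : ℕ × ℕ))
  set S₂ := {p ∈ S | (p.n, p.dom.card) = (n, m)} with hS₂def
  have hS₂n : ∀ p ∈ S₂, p.n = n := fun p hp => (Prod.mk.injEq .. ▸ hp.2).1
  have hS₂m : ∀ p ∈ S₂, p.dom.card = m := fun p hp => (Prod.mk.injEq .. ▸ hp.2).2
  -- domain fibers are countable
  have hfib : ∀ (U : Set (QCond α)), U ⊆ S₂ → ∀ F : Finset α,
      {p ∈ U | p.dom = F}.Countable := by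
    intro U hU F
    refine (QCond.fiber_countable n F).mono ?_
    rintro p ⟨hpU, hpd⟩
    exact ⟨hS₂n p (hU hpU), hpd⟩
  -- image uncountable for any uncountable subset of S₂
  have himg : ∀ (U : Set (QCond α)), U ⊆ S₂ → ¬ U.Countable →
      ¬ ((fun p : QCond α => p.dom) '' U).Countable := by
    intro U hU hUc hc
    apply hUc
    have hU' : U = ⋃ F ∈ (fun p : QCond α => p.dom) '' U, {p ∈ U | p.dom = F} := by
      ext p
      simp only [Set.mem_iUnion, Set.mem_setOf_eq]
      constructor
      · intro hp; exact ⟨p.dom, ⟨p, hp, rfl⟩, hp, rfl⟩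
      · rintro ⟨F, _, hp, _⟩; exact hp
    rw [hU']
    exact hc.biUnion fun F _ => hfib U hU F
  -- Step 2: Δ-system
  obtain ⟨ℬ, hℬA, hℬu, R, hR⟩ := delta_system m _ (himg S₂ (le_refl _) hnm)
    (by rintro A ⟨p, hp, rfl⟩; exact hS₂m p hp)
  set S₃ := {p ∈ S₂ | p.dom ∈ ℬ} with hS₃def
  have hS₃sub : S₃ ⊆ S₂ := fun p hp => hp.1
  have hS₃u : ¬ S₃.Countable := by
    intro hc
    apply hℬu
    have hsub : ℬ ⊆ (fun p : QCond α => p.dom) '' S₃ := by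
      intro F hF
      obtain ⟨p, hp, rfl⟩ := hℬA hF
      exact ⟨p, ⟨hp, hF⟩, rfl⟩
    exact ((hc.image _).mono hsub)
  -- Step 3: fix the values on the root
  obtain ⟨v, hv⟩ := exists_uncountable_fiber hS₃u
    (fun p : QCond α => (fun (a : R) (k : Fin n) => p.f a k : R → Fin n → Bool))
  set S₄ := {p ∈ S₃ | (fun (a : R) (k : Fin n) => p.f a k) = v} with hS₄def
  have hS₄sub : S₄ ⊆ S₂ := fun p hp => hS₃sub hp.1
  -- Step 4: pick one condition per domain
  have hrep : ∀ F ∈ (fun p : QCond α => p.dom) '' S₄, ∃ p, p ∈ S₄ ∧ p.dom = F := by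
    rintro F ⟨p, hp, rfl⟩; exact ⟨p, hp, rfl⟩
  set g : ((fun p : QCond α => p.dom) '' S₄) → QCond α :=
    fun F => (hrep F.1 F.2).choose with hgdef
  have hg : ∀ F, g F ∈ S₄ ∧ (g F).dom = F.1 := fun F => (hrep F.1 F.2).choose_spec
  refine ⟨Set.range g, ?_, ?_, ?_⟩
  · rintro p ⟨F, rfl⟩
    exact ((hg F).1.1.1).1
  · intro hc
    apply himg S₄ hS₄sub hv
    refine Set.Countable.mono ?_ (hc.image (fun p : QCond α => p.dom))
    intro F hF
    exact ⟨g ⟨F, hF⟩, ⟨⟨F, hF⟩, rfl⟩, (hg ⟨F, hF⟩).2⟩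
  · rintro p ⟨F, rfl⟩ q ⟨G, rfl⟩ hpq
    have hFG : F.1 ≠ G.1 := by
      intro h
      exact hpq (congrArg g (Subtype.ext h))
    have hpS₄ := (hg F).1
    have hqS₄ := (hg G).1
    have hpn := hS₂n _ (hS₄sub hpS₄)
    have hqn := hS₂n _ (hS₄sub hqS₄)
    have hdom : (g F).dom ∩ (g G).dom = R := by
      rw [(hg F).2, (hg G).2]
      refine hR F.1 ?_ G.1 ?_ hFG
      · rw [← (hg F).2]; exact hpS₄.1.2
      · rw [← (hg G).2]; exact hqS₄.1.2
    refine QCond.compatible_of_agree (hpn.trans hqn.symm) ?_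
    intro a ha k
    rw [hdom] at ha
    by_cases hk : k < n
    · have h1 : (g F).f a k = v ⟨a, ha⟩ ⟨k, hk⟩ := by
        rw [← hpS₄.2]
      have h2 : (g G).f a k = v ⟨a, ha⟩ ⟨k, hk⟩ := by
        rw [← hqS₄.2]
      rw [h1, h2]
    · rw [(g F).f_eq_false (fun h => hk (hpn ▸ h.2)),
        (g G).f_eq_false (fun h => hk (hqn ▸ h.2))]
end

section
/- For u ⊆ μ, the restriction map p ↦ p↾u (restricting the domain of p to u ∩ dom(p)) from Q_μ to Q_{μ,u} satisfies: (a) p↾u ∈ Q_{μ,u} and p↾u ≤ p in Q_μ; (b) if q ∈ Q_{μ,u} and p↾u ≤ q, then p and q are compatible in Q_μ. -/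
/-- The restriction `p ↾ u` of a condition `p` to a set `u ⊆ α`. -/
def QRestrict {α : Type} (p : QCond α) (u : Set α) [DecidablePred (· ∈ u)] : QCond α where
  n := p.n
  dom := p.dom.filter (· ∈ u)
  f := fun a k => if a ∈ u then p.f a k else false
  hf := by
    intro a k h
    by_cases ha : a ∈ u
    · simp only [ha, if_true] at h
      exact ⟨Finset.mem_filter.2 ⟨(p.hf a k h).1, ha⟩, (p.hf a k h).2⟩
    · simp [ha] at h

/-! A common extension of `p` and `q` is obtained by following `q` on `u` and `p` off `u`.
Since all bits of `p` beyond `n_p` are `0`, the disjointness requirement for `p ≤ r` only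
concerns pairs of coordinates in `u`, where it is exactly the one given by `p ↾ u ≤ q`. -/

theorem QCond.f_eq_false_of_le {α : Type} (p : QCond α) (a : α) {k : ℕ} (hk : p.n ≤ k) :
    p.f a k = false :=
  Bool.eq_false_iff.2 fun h => absurd (p.hf a k h).2 (Nat.not_lt.2 hk)

theorem QLE_of_forall_f_eq {α : Type} {q r : QCond α} (hdom : q.dom ⊆ r.dom) (hn : q.n ≤ r.n)
    (hf : ∀ a ∈ q.dom, r.f a = q.f a) : QLE q r := by
  refine ⟨hdom, hn, fun a ha k _ => by rw [hf a ha], ?_⟩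
  intro a ha _ _ _ k hk _
  left
  rw [hf a ha, q.f_eq_false_of_le a hk]

section Restrict

open Classical

variable {α : Type} (p : QCond α) (u : Set α) [DecidablePred (· ∈ u)]

theorem QRestrict_dom_subset : ↑(QRestrict p u).dom ⊆ u := by
  intro a ha
  exact (Finset.mem_filter.1 ha).2

theorem QRestrict_le : QLE (QRestrict p u) p := by
  refine QLE_of_forall_f_eq (Finset.filter_subset _ _) le_rfl fun a ha => ?_
  funext k
  simp [QRestrict, (Finset.mem_filter.1 ha).2]

noncomputable def QAmalgamate (q : QCond α) : QCond α where
  n := max p.n q.n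
  dom := p.dom ∪ q.dom
  f := fun a k => if a ∈ u then q.f a k else p.f a k
  hf := by
    intro a k h
    split_ifs at h
    · exact ⟨Finset.mem_union_right _ (q.hf a k h).1, lt_max_of_lt_right (q.hf a k h).2⟩
    · exact ⟨Finset.mem_union_left _ (p.hf a k h).1, lt_max_of_lt_left (p.hf a k h).2⟩

variable {p u} {q : QCond α}

theorem le_QAmalgamate_right (hqu : ↑q.dom ⊆ u) : QLE q (QAmalgamate p u q) := by
  refine QLE_of_forall_f_eq Finset.subset_union_right (le_max_right _ _) fun a ha => ?_
  funext k
  simp [QAmalgamate, hqu ha]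

theorem le_QAmalgamate_left (hle : QLE (QRestrict p u) q) : QLE p (QAmalgamate p u q) := by
  obtain ⟨_, hn, hinit, hdisj⟩ := hle
  have hpn : p.n ≤ q.n := hn
  have off_u_eq_false : ∀ a, a ∉ u → ∀ k, p.n ≤ k → (QAmalgamate p u q).f a k = false := by
    intro a ha k hk
    simpa [QAmalgamate, ha] using p.f_eq_false_of_le a hk
  refine ⟨Finset.subset_union_left, le_max_left _ _, ?_, ?_⟩
  · intro a ha k hk
    by_cases hau : a ∈ u
    · simpa [QAmalgamate, QRestrict, hau] using hinit a (Finset.mem_filter.2 ⟨ha, hau⟩) k hk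
    · simp [QAmalgamate, hau]
  · intro a ha b hb hab k hk hkr
    by_cases hau : a ∈ u
    · by_cases hbu : b ∈ u
      · have hkq : k < q.n := by simpa [QAmalgamate, hpn] using hkr
        simpa [QAmalgamate, hau, hbu] using
          hdisj a (Finset.mem_filter.2 ⟨ha, hau⟩) b (Finset.mem_filter.2 ⟨hb, hbu⟩) hab k hk hkq
      · exact Or.inr (off_u_eq_false b hbu k hk)
    · exact Or.inl (off_u_eq_false a hau k hk)

theorem QRestrict_compatible (hqu : ↑q.dom ⊆ u) (hle : QLE (QRestrict p u) q) :
    QCompatible p q :=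
  ⟨QAmalgamate p u q, le_QAmalgamate_left hle, le_QAmalgamate_right hqu⟩

end Restrict

/-- (a) `p ↾ u` is a condition of `Q_{μ,u}` and `p ↾ u ≤ p`;
    (b) if `q ∈ Q_{μ,u}` and `p ↾ u ≤ q`, then `p` and `q` are compatible in `Q_μ`. -/
theorem QRestrict_projection {α : Type} (p : QCond α) (u : Set α) [DecidablePred (· ∈ u)] :
    (↑(QRestrict p u).dom ⊆ u ∧ QLE (QRestrict p u) p) ∧
    (∀ q : QCond α, ↑q.dom ⊆ u → QLE (QRestrict p u) q →
      ∃ r : QCond α, QLE p r ∧ QLE q r) :=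
  ⟨⟨QRestrict_dom_subset p u, QRestrict_le p u⟩, fun _ hqu hle => QRestrict_compatible hqu hle⟩
end

section
/- The finite support product of a family of posets each having the Knaster property has the Knaster property. -/
/-- A condition of the finite support product of the posets `P i`: a partial
function with finite support. -/
def FSCond {I : Type} (P : I → Type) : Type :=
  { f : ∀ i, Option (P i) // {i | f i ≠ none}.Finite }

/-- The coordinatewise order on the finite support product (with domain
inclusion). -/
def FSLE {I : Type} {P : I → Type} [∀ i, Preorder (P i)] (p q : FSCond P) : Prop :=
  ∀ i, ∀ x, p.1 i = some x → ∃ y, q.1 i = some y ∧ x ≤ y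

/-- A poset has the Knaster property if every uncountable subset has an
uncountable pairwise compatible subset. -/
def KnasterProp (Q : Type) (le : Q → Q → Prop) : Prop :=
  ∀ S : Set Q, ¬ S.Countable →
    ∃ T ⊆ S, ¬ T.Countable ∧ T.Pairwise fun x y => ∃ z, le x z ∧ le y z

/-!
By the Δ-system lemma (in the weak form: pairwise intersections lie in a fixed finite root `R`),
an uncountable set of conditions has an uncountable subset whose supports pairwise meet inside
`R`. Reading an undefined coordinate as `⊥`, each `WithBot (P i)` is again Knaster, so finitely
many further refinements make the conditions pairwise compatible at every coordinate of `R`.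
Outside `R` two distinct conditions are never both defined, so they are compatible at every
coordinate, and a common extension is assembled coordinatewise.
-/

open Set

section DeltaSystem

variable {α β : Type*}

theorem exists_not_countable_fiber {S : Set α} (hS : ¬S.Countable) (f : α → β)
    (hf : (f '' S).Countable) : ∃ b, ¬{x ∈ S | f x = b}.Countable := by
  by_contra! h
  refine hS ((hf.biUnion fun b _ => h b).mono fun x hx => ?_)
  exact mem_iUnion₂.2 ⟨f x, mem_image_of_mem f hx, hx, rfl⟩

variable {ι : Type*}

theorem exists_not_countable_pairwiseDisjoint {f : α → Finset ι} {S : Set α}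
    (hS : ¬S.Countable) (hpt : ∀ a, {x ∈ S | a ∈ f x}.Countable) :
    ∃ T ⊆ S, ¬T.Countable ∧ T.PairwiseDisjoint f := by
  obtain ⟨M, hM⟩ := zorn_subset {T | T ⊆ S ∧ T.PairwiseDisjoint f} fun c hcS hc =>
    ⟨⋃₀ c, ⟨sUnion_subset fun T hT => (hcS hT).1,
      (hc.pairwiseDisjoint_sUnion f).2 fun T hT => (hcS hT).2⟩,
      fun _ => subset_sUnion_of_mem⟩
  refine ⟨M, hM.prop.1, fun hMc => ?_, hM.prop.2⟩
  have hbad : (M ∪ ⋃ t ∈ M, ⋃ a ∈ f t, {x ∈ S | a ∈ f x}).Countable :=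
    hMc.union <| hMc.biUnion fun t _ => (f t).countable_toSet.biUnion fun a _ => hpt a
  obtain ⟨x, hxS, hx⟩ := not_subset.1 fun h => hS (hbad.mono h)
  rw [mem_union, not_or, mem_iUnion₂] at hx
  refine hx.1 (hM.mem_of_prop_insert ⟨insert_subset hxS hM.prop.1, hM.prop.2.insert ?_⟩)
  intro t ht _
  exact Finset.disjoint_left.2 fun a hax hat =>
    hx.2 ⟨t, ht, mem_biUnion (Finset.mem_coe.2 hat) ⟨hxS, hax⟩⟩

variable [DecidableEq ι]

theorem exists_not_countable_pairwise_inter_subset_of_card_eq (n : ℕ) :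
    ∀ (f : α → Finset ι) {S : Set α}, (∀ x ∈ S, (f x).card = n) → ¬S.Countable →
      ∃ R : Finset ι, ∃ T ⊆ S, ¬T.Countable ∧ T.Pairwise fun x y => f x ∩ f y ⊆ R := by
  induction n with
  | zero =>
    intro f S hcard hS
    refine ⟨∅, S, subset_rfl, hS, fun x hx _ _ _ => ?_⟩
    simp [Finset.card_eq_zero.1 (hcard x hx)]
  | succ n ih =>
    intro f S hcard hS
    by_cases hpt : ∃ a, ¬{x ∈ S | a ∈ f x}.Countable
    · obtain ⟨a, ha⟩ := hpt
      obtain ⟨R, T, hT, hTc, hTR⟩ := ih (fun x => (f x).erase a)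
        (fun x hx => by rw [Finset.card_erase_of_mem hx.2, hcard x hx.1]; rfl) ha
      refine ⟨insert a R, T, hT.trans (sep_subset _ _), hTc, hTR.imp fun x y h => ?_⟩
      rw [Finset.subset_insert_iff]
      rwa [Finset.inter_erase, Finset.erase_inter, Finset.erase_idem] at h
    · push Not at hpt
      obtain ⟨T, hT, hTc, hTd⟩ := exists_not_countable_pairwiseDisjoint hS hpt
      exact ⟨∅, T, hT, hTc, hTd.imp fun x y h => (Finset.disjoint_iff_inter_eq_empty.1 h).le⟩

theorem exists_not_countable_pairwise_inter_subset (f : α → Finset ι) {S : Set α}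
    (hS : ¬S.Countable) :
    ∃ R : Finset ι, ∃ T ⊆ S, ¬T.Countable ∧ T.Pairwise fun x y => f x ∩ f y ⊆ R := by
  obtain ⟨n, hn⟩ := exists_not_countable_fiber hS (fun x => (f x).card) (to_countable _)
  obtain ⟨R, T, hT, hTc, hTR⟩ :=
    exists_not_countable_pairwise_inter_subset_of_card_eq n f (fun x hx => hx.2) hn
  exact ⟨R, T, hT.trans (sep_subset _ _), hTc, hTR⟩

end DeltaSystem

namespace KnasterProp

variable {Q : Type} [Preorder Q]

theorem exists_not_countable_compatible {α : Type*} (hQ : KnasterProp Q (· ≤ ·)) (f : α → Q)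
    {S : Set α} (hS : ¬S.Countable) :
    ∃ T ⊆ S, ¬T.Countable ∧ ∀ x ∈ T, ∀ y ∈ T, ∃ z, f x ≤ z ∧ f y ≤ z := by
  by_cases hf : (f '' S).Countable
  · obtain ⟨b, hb⟩ := exists_not_countable_fiber hS f hf
    exact ⟨_, sep_subset _ _, hb, fun x hx y hy => ⟨b, hx.2.le, hy.2.le⟩⟩
  obtain ⟨W, hWS, hW, hWc⟩ := hQ _ hf
  refine ⟨S ∩ f ⁻¹' W, inter_subset_left, fun hc => hW ((hc.image f).mono ?_), ?_⟩
  · rintro w hw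
    obtain ⟨x, hx, rfl⟩ := hWS hw
    exact mem_image_of_mem f ⟨hx, hw⟩
  · intro x hx y hy
    by_cases hxy : f x = f y
    · exact ⟨f y, hxy.le, le_rfl⟩
    · exact hWc hx.2 hy.2 hxy

theorem withBot (hQ : KnasterProp Q (· ≤ ·)) : KnasterProp (WithBot Q) (· ≤ ·) := by
  intro S hS
  have hS' : ¬((↑) ⁻¹' S : Set Q).Countable := fun hc =>
    hS (((hc.image _).insert ⊥).mono fun x hx => by
      cases x with
      | bot => exact mem_insert _ _
      | coe a => exact mem_insert_of_mem _ (mem_image_of_mem _ hx))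
  obtain ⟨W, hWS, hW, hWc⟩ := hQ _ hS'
  refine ⟨(↑) '' W, image_subset_iff.2 hWS,
    fun hc => hW ((hc.preimage WithBot.coe_injective).mono (subset_preimage_image _ _)), ?_⟩
  rintro _ ⟨a, ha, rfl⟩ _ ⟨b, hb, rfl⟩ hab
  obtain ⟨z, haz, hbz⟩ := hWc ha hb (ne_of_apply_ne _ hab)
  exact ⟨z, WithBot.coe_le_coe.2 haz, WithBot.coe_le_coe.2 hbz⟩

end KnasterProp

theorem exists_not_countable_compatible_on_finset {α ι : Type*} {Q : ι → Type}
    [∀ i, Preorder (Q i)] (hQ : ∀ i, KnasterProp (Q i) (· ≤ ·)) (f : α → ∀ i, Q i)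
    (R : Finset ι) {S : Set α} (hS : ¬S.Countable) :
    ∃ T ⊆ S, ¬T.Countable ∧ ∀ i ∈ R, ∀ x ∈ T, ∀ y ∈ T, ∃ z, f x i ≤ z ∧ f y i ≤ z := by
  induction R using Finset.cons_induction with
  | empty => exact ⟨S, subset_rfl, hS, by simp⟩
  | cons a R _ ih =>
    obtain ⟨T, hT, hTc, hTR⟩ := ih
    obtain ⟨U, hU, hUc, hUa⟩ := (hQ a).exists_not_countable_compatible (f · a) hTc
    refine ⟨U, hU.trans hT, hUc, fun i hi x hx y hy => ?_⟩
    rcases Finset.mem_cons.1 hi with rfl | hi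
    · exact hUa x hx y hy
    · exact hTR i hi x (hU hx) y (hU hy)

namespace FSCond

variable {I : Type} {P : I → Type}

/-- An undefined coordinate is read as `⊥`, which turns `FSLE` into the coordinatewise order. -/
def coord (p : FSCond P) (i : I) : WithBot (P i) := p.1 i

noncomputable def support (p : FSCond P) : Finset I := p.2.toFinset

theorem mem_support {p : FSCond P} {i : I} : i ∈ p.support ↔ p.coord i ≠ ⊥ :=
  p.2.mem_toFinset

variable [∀ i, Preorder (P i)]

theorem fsle_iff_forall_coord_le {p q : FSCond P} : FSLE p q ↔ ∀ i, p.coord i ≤ q.coord i :=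
  forall_congr' fun _ => WithBot.le_iff_forall.symm

theorem exists_fsle_of_forall_coord {p q : FSCond P}
    (h : ∀ i, ∃ z, p.coord i ≤ z ∧ q.coord i ≤ z) : ∃ r, FSLE p r ∧ FSLE q r := by
  classical
  choose z hz using h
  -- `r` is undefined wherever `p` and `q` are, which keeps its support finite.
  let r : FSCond P := ⟨fun i => (if p.coord i = ⊥ ∧ q.coord i = ⊥ then ⊥ else z i : WithBot _),
    (p.2.union q.2).subset fun i hi => by
      by_contra h
      rw [mem_union, not_or] at h
      exact hi (if_pos ⟨of_not_not h.1, of_not_not h.2⟩)⟩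
  have hr : ∀ i, r.coord i = if p.coord i = ⊥ ∧ q.coord i = ⊥ then ⊥ else z i := fun _ => rfl
  refine ⟨r, fsle_iff_forall_coord_le.2 fun i => ?_, fsle_iff_forall_coord_le.2 fun i => ?_⟩
  · rw [hr]
    split_ifs with hi
    exacts [hi.1.le, (hz i).1]
  · rw [hr]
    split_ifs with hi
    exacts [hi.2.le, (hz i).2]

end FSCond

/-- The finite support product of a family of posets each having the Knaster
property has the Knaster property. -/
theorem knaster_finite_support_product {I : Type} (P : I → Type)
    [∀ i, Preorder (P i)]
    (hP : ∀ i, KnasterProp (P i) (· ≤ ·)) :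
    KnasterProp (FSCond P) FSLE := by
  classical
  intro S hS
  obtain ⟨R, A, hAS, hA, hAR⟩ := exists_not_countable_pairwise_inter_subset FSCond.support hS
  obtain ⟨B, hBA, hB, hBR⟩ := exists_not_countable_compatible_on_finset
    (fun i => (hP i).withBot) FSCond.coord R hA
  refine ⟨B, hBA.trans hAS, hB, fun p hp q hq hpq => FSCond.exists_fsle_of_forall_coord fun i => ?_⟩
  by_cases hi : i ∈ R
  · exact hBR i hi p hp q hq
  have hbot : p.coord i = ⊥ ∨ q.coord i = ⊥ := by
    by_contra! h
    exact hi (hAR (hBA hp) (hBA hq) hpq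
      (Finset.mem_inter.2 ⟨FSCond.mem_support.2 h.1, FSCond.mem_support.2 h.2⟩))
  rcases hbot with h | h
  · exact ⟨q.coord i, h ▸ bot_le, le_rfl⟩
  · exact ⟨p.coord i, le_rfl, h ▸ bot_le⟩
end
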